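/- Let $\Xi$ be a generalized stealthy random measure on $\mathbb{R}^d$ with gap $U$ and intensity $\rho > 0$. Then there is an event of probability $1$ on which the following holds simultaneously for every Schwartz function $\varphi : \mathbb{R}^d \to \mathbb{C}$ whose Fourier transform $\mathcal{F}\varphi$ has compact support contained in $U$: the function $\varphi$ is integrable with respect to the realized measure $\Xi_\omega$ and $\int_{\mathbb{R}^d} \varphi \, \mathrm{d}\Xi_\omega = \rho \int_{\mathbb{R}^d} \varphi(x)\,\mathrm{d}x$. -/

import Mathlib

/-!
For a single `φ` with `𝓕 φ` supported in the gap, the variance formula gives `Var I(φ) = 0`, so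
`I(φ) = ρ ∫ φ` almost surely. To get one null set for all such `φ`, write `⟨x⟩ = (1 + ‖x‖²)^(1/2)`.
Fourier inversion gives `|φ x| ≤ ‖𝓕 (⟨·⟩^(d+1) φ)‖₁ ⟨x⟩^-(d+1)`, so on the event
`∫ ⟨x⟩^-(d+1) dΞ < ∞` both `φ ↦ ∫ φ dΞ` and `φ ↦ ρ ∫ φ` are Lipschitz for the seminorm
`‖𝓕 (⟨·⟩^(d+1) φ)‖₁`. That event has full probability: smooth truncations of `⟨x⟩^-(d+1)` are
Schwartz, so by monotone convergence its expected `Ξ`-integral is at most `ρ ∫ ⟨x⟩^-(d+1) < ∞`.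
Finally `L¹` is separable, so countably many band-limited `φ` are dense for this seminorm among all
band-limited ones, and almost sure equality on them propagates to all.
-/

open MeasureTheory ProbabilityTheory Metric
open scoped FourierTransform RealInnerProductSpace BigOperators

noncomputable section

/-- Euclidean space `ℝ^d`. -/
abbrev Ed (d : ℕ) := EuclideanSpace ℝ (Fin d)

/-- A random measure `Ξ` has intensity `ρ` and structure function `S` if, for every
Schwartz test function `φ`, the linear statistic `I(φ) = ∫ φ d[Ξ]` is square integrable,
has mean `ρ ∫ φ`, and has variance `∫ |𝓕φ(ξ)|² S(ξ) dξ`. -/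
def HasIntensityAndStructure {d : ℕ} {Ω : Type*} [MeasurableSpace Ω]
    (P : Measure Ω) (Ξ : Ω → Measure (Ed d)) (ρ : ℝ) (S : Ed d → ℝ) : Prop :=
  ∀ φ : SchwartzMap (Ed d) ℂ,
    MemLp (fun ω => ∫ x, φ x ∂(Ξ ω)) 2 P ∧
    (∫ ω, (∫ x, φ x ∂(Ξ ω)) ∂P) = (ρ : ℂ) * (∫ x, φ x) ∧
    (∫ ω, ‖(∫ x, φ x ∂(Ξ ω)) - (∫ ω', (∫ x, φ x ∂(Ξ ω')) ∂P)‖ ^ 2 ∂P)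
      = (∫ ξ, ‖𝓕 (fun x => (φ x : ℂ)) ξ‖ ^ 2 * S ξ)

open SchwartzMap Module

section FourierBound

variable {V E : Type*} [NormedAddCommGroup V] [InnerProductSpace ℝ V] [FiniteDimensional ℝ V]
  [MeasurableSpace V] [BorelSpace V] [NormedAddCommGroup E] [NormedSpace ℂ E] [CompleteSpace E]

theorem Continuous.norm_le_integral_norm_fourier {f : V → E} (hc : Continuous f)
    (hf : Integrable f) (hFf : Integrable (𝓕 f)) (x : V) : ‖f x‖ ≤ ∫ ξ, ‖(𝓕 f : V → E) ξ‖ := by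
  rw [← congrFun (hc.fourierInv_fourier_eq hf hFf) x, Real.fourierInv_eq_fourier_neg]
  exact VectorFourier.norm_fourierIntegral_le_integral_norm _ _ _ _ _

end FourierBound

section DecayWeight

variable (V : Type*) [NormedAddCommGroup V] [InnerProductSpace ℝ V]

def growthWeight (x : V) : ℝ := (1 + ‖x‖ ^ 2) ^ ((finrank ℝ V + 1 : ℝ) / 2)

def decayWeight (x : V) : ℝ := (growthWeight V x)⁻¹

variable {V}

theorem growthWeight_pos (x : V) : 0 < growthWeight V x := by
  unfold growthWeight; positivity

theorem decayWeight_pos (x : V) : 0 < decayWeight V x := inv_pos.2 (growthWeight_pos x)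

theorem hasTemperateGrowth_growthWeight :
    Function.HasTemperateGrowth (fun x => (growthWeight V x : ℂ)) :=
  Function.Complex.hasTemperateGrowth_ofReal.comp
    (Function.hasTemperateGrowth_one_add_norm_sq_rpow V _)

theorem contDiff_decayWeight : ContDiff ℝ (⊤ : ℕ∞) (decayWeight V) := by
  have h : decayWeight V = fun x => (1 + ‖x‖ ^ 2) ^ (-((finrank ℝ V + 1 : ℝ) / 2)) := by
    funext x
    rw [decayWeight, growthWeight, Real.rpow_neg (by positivity)]
  rw [h]
  exact (Function.hasTemperateGrowth_one_add_norm_sq_rpow V _).1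

theorem integrable_decayWeight [FiniteDimensional ℝ V] [MeasurableSpace V] [BorelSpace V] :
    Integrable (decayWeight V) := by
  convert integrable_rpow_neg_one_add_norm_sq (E := V) (μ := volume)
    (r := finrank ℝ V + 1) (by linarith) using 2 with x
  rw [decayWeight, growthWeight, neg_div, Real.rpow_neg (by positivity)]

variable [FiniteDimensional ℝ V] [MeasurableSpace V] [BorelSpace V]

variable (V) in
def weightedFourierL1 : 𝓢(V, ℂ) →L[ℂ] Lp ℂ 1 (volume : Measure V) :=
  toLpCLM ℂ ℂ 1 volume ∘L fourierTransformCLM ℂ ∘L smulLeftCLM ℂ (fun x => (growthWeight V x : ℂ))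

theorem SchwartzMap.norm_le_norm_weightedFourierL1_mul (φ : 𝓢(V, ℂ)) (x : V) :
    ‖φ x‖ ≤ ‖weightedFourierL1 V φ‖ * decayWeight V x := by
  set ψ := smulLeftCLM ℂ (fun x => (growthWeight V x : ℂ)) φ
  have hψ : ‖ψ x‖ = growthWeight V x * ‖φ x‖ := by
    simp [ψ, smulLeftCLM_apply_apply hasTemperateGrowth_growthWeight, (growthWeight_pos x).le]
  have hbound : ‖ψ x‖ ≤ ‖weightedFourierL1 V φ‖ := by
    simpa [weightedFourierL1, norm_toLp_one, ψ, fourier_coe] using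
      ψ.continuous.norm_le_integral_norm_fourier ψ.integrable (𝓕 ψ).integrable x
  rw [decayWeight, ← div_eq_mul_inv, le_div_iff₀ (growthWeight_pos x), mul_comm, ← hψ]
  exact hbound

end DecayWeight

section IntegralBounds

variable {V : Type*} [NormedAddCommGroup V] [InnerProductSpace ℝ V] [FiniteDimensional ℝ V]
  [MeasurableSpace V] [BorelSpace V] {μ ν : Measure V}

theorem SchwartzMap.integrable_of_integrable_decayWeight (hμ : Integrable (decayWeight V) μ)
    (φ : 𝓢(V, ℂ)) : Integrable φ μ :=
  (hμ.const_mul ‖weightedFourierL1 V φ‖).mono' φ.continuous.aestronglyMeasurable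
    (ae_of_all _ φ.norm_le_norm_weightedFourierL1_mul)

theorem SchwartzMap.norm_integral_sub_integral_le (hμ : Integrable (decayWeight V) μ)
    (φ ψ : 𝓢(V, ℂ)) :
    ‖∫ x, φ x ∂μ - ∫ x, ψ x ∂μ‖ ≤
      dist (weightedFourierL1 V φ) (weightedFourierL1 V ψ) * ∫ x, decayWeight V x ∂μ := by
  rw [← integral_sub (φ.integrable_of_integrable_decayWeight hμ)
    (ψ.integrable_of_integrable_decayWeight hμ), dist_eq_norm, ← map_sub, ← integral_const_mul]
  refine norm_integral_le_of_norm_le (hμ.const_mul _) (ae_of_all _ fun x => ?_)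
  simpa using (φ - ψ).norm_le_norm_weightedFourierL1_mul x

theorem SchwartzMap.integral_eq_of_mem_closure_image (hμ : Integrable (decayWeight V) μ)
    (hν : Integrable (decayWeight V) ν) {D : Set 𝓢(V, ℂ)}
    (hD : ∀ ψ ∈ D, ∫ x, ψ x ∂μ = ∫ x, ψ x ∂ν) {φ : 𝓢(V, ℂ)}
    (hφ : weightedFourierL1 V φ ∈ closure (weightedFourierL1 V '' D)) :
    ∫ x, φ x ∂μ = ∫ x, φ x ∂ν := by
  set K := ∫ x, decayWeight V x ∂μ + ∫ x, decayWeight V x ∂ν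
  have hK : 0 ≤ K := add_nonneg (integral_nonneg fun x => (decayWeight_pos x).le)
    (integral_nonneg fun x => (decayWeight_pos x).le)
  refine eq_of_forall_dist_le fun ε hε => ?_
  obtain ⟨-, ⟨ψ, hψD, rfl⟩, hψ⟩ :=
    Metric.mem_closure_iff.1 hφ (ε / (K + 1)) (by positivity)
  calc dist (∫ x, φ x ∂μ) (∫ x, φ x ∂ν)
      = ‖(∫ x, φ x ∂μ - ∫ x, ψ x ∂μ) - (∫ x, φ x ∂ν - ∫ x, ψ x ∂ν)‖ := by
        rw [dist_eq_norm, hD ψ hψD]; ring_nf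
    _ ≤ dist (weightedFourierL1 V φ) (weightedFourierL1 V ψ) * K := by
        rw [mul_add]
        exact (norm_sub_le _ _).trans (add_le_add (φ.norm_integral_sub_integral_le hμ ψ)
          (φ.norm_integral_sub_integral_le hν ψ))
    _ ≤ ε / (K + 1) * (K + 1) := by gcongr; linarith
    _ = ε := div_mul_cancel₀ _ (by positivity)

end IntegralBounds

theorem exists_countable_subset_image_subset_closure {α X : Type*} [TopologicalSpace X]
    [TopologicalSpace.PseudoMetrizableSpace X] [TopologicalSpace.SeparableSpace X]
    (g : α → X) (s : Set α) : ∃ t ⊆ s, t.Countable ∧ g '' s ⊆ closure (g '' t) := by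
  obtain ⟨u, hus, huc, hsu⟩ :=
    (TopologicalSpace.IsSeparable.of_separableSpace (g '' s)).exists_countable_dense_subset
  obtain ⟨t, hts, hbij⟩ := Set.exists_subset_bijOn (s ∩ g ⁻¹' u) g
  rw [Set.image_inter_preimage, Set.inter_eq_right.2 hus] at hbij
  refine ⟨t, hts.trans Set.inter_subset_left, ?_, hbij.image_eq ▸ hsu⟩
  exact Set.MapsTo.countable_of_injOn hbij.mapsTo hbij.injOn huc

theorem ae_eq_of_integral_norm_sub_sq_eq_zero {Ω E : Type*} [MeasurableSpace Ω]
    [NormedAddCommGroup E] {P : Measure Ω} [IsFiniteMeasure P] {f : Ω → E} (hf : MemLp f 2 P)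
    (c : E) (h : ∫ ω, ‖f ω - c‖ ^ 2 ∂P = 0) : ∀ᵐ ω ∂P, f ω = c := by
  have hint : Integrable (fun ω => ‖f ω - c‖ ^ 2) P :=
    (hf.sub (memLp_const c)).integrable_norm_pow two_ne_zero
  filter_upwards [(integral_eq_zero_iff_of_nonneg (fun ω => by positivity) hint).1 h] with ω hω
  simpa [sub_eq_zero] using hω

section Cutoff

variable {E : Type*} [NormedAddCommGroup E] [NormedSpace ℝ E] [HasContDiffBump E]

variable (E) in
def cutoffBump (k : ℕ) : ContDiffBump (0 : E) := ⟨k + 1, k + 2, by positivity, by linarith⟩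

theorem cutoffBump_eq_one {k : ℕ} {x : E} (hx : ‖x‖ ≤ k + 1) : cutoffBump E k x = 1 :=
  (cutoffBump E k).one_of_mem_closedBall (by simpa [cutoffBump] using hx)

theorem monotone_cutoffBump (x : E) : Monotone fun k => cutoffBump E k x := by
  refine monotone_nat_of_le_succ fun k => ?_
  by_cases hx : ‖x‖ < k + 2
  · rw [cutoffBump_eq_one (x := x) (k := k + 1) (by push_cast; linarith)]
    exact (cutoffBump E k).le_one
  · have : x ∉ Function.support (cutoffBump E k) := by
      rw [(cutoffBump E k).support_eq]; simpa [cutoffBump] using hx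
    rw [Function.notMem_support.1 this]
    exact (cutoffBump E (k + 1)).nonneg

theorem iSup_ofReal_cutoffBump_mul {f : E → ℝ} (x : E) (hf : 0 ≤ f x) :
    ⨆ k, ENNReal.ofReal (cutoffBump E k x * f x) = ENNReal.ofReal (f x) := by
  refine le_antisymm (iSup_le fun k => ENNReal.ofReal_le_ofReal ?_) ?_
  · exact mul_le_of_le_one_left hf (cutoffBump E k).le_one
  · refine le_iSup_of_le ⌈‖x‖⌉₊ ?_
    rw [cutoffBump_eq_one ((Nat.le_ceil _).trans (by linarith)), one_mul]

end Cutoff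

namespace HasIntensityAndStructure

variable {d : ℕ} {Ω : Type*} [MeasurableSpace Ω] {P : Measure Ω} [IsFiniteMeasure P]
  {Ξ : Ω → Measure (Ed d)} {ρ : ℝ} {S : Ed d → ℝ}

theorem ae_integral_eq_of_tsupport_fourier_subset (hIS : HasIntensityAndStructure P Ξ ρ S)
    {U : Set (Ed d)} (hgap : ∀ ξ ∈ U, S ξ = 0) {φ : 𝓢(Ed d, ℂ)}
    (hφ : tsupport (𝓕 (fun x => φ x)) ⊆ U) :
    ∀ᵐ ω ∂P, ∫ x, φ x ∂(Ξ ω) = ρ * ∫ x, φ x := by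
  obtain ⟨hL2, hmean, hvar⟩ := hIS φ
  have hzero : ∫ ξ, ‖𝓕 (fun x => φ x) ξ‖ ^ 2 * S ξ = 0 := by
    refine integral_eq_zero_of_ae (ae_of_all _ fun ξ => ?_)
    by_cases hξ : ξ ∈ U
    · simp [hgap ξ hξ]
    · simp [image_eq_zero_of_notMem_tsupport fun h => hξ (hφ h)]
  rw [hzero, hmean] at hvar
  exact ae_eq_of_integral_norm_sub_sq_eq_zero hL2 _ hvar

theorem lintegral_lintegral_ofReal_eq_of_hasCompactSupport
    (hIS : HasIntensityAndStructure P Ξ ρ S) (hΞloc : ∀ ω, IsLocallyFiniteMeasure (Ξ ω))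
    {f : Ed d → ℝ} (hf : ContDiff ℝ (⊤ : ℕ∞) f)
    (hcs : HasCompactSupport f) (hnn : 0 ≤ f) :
    ∫⁻ ω, ∫⁻ x, ENNReal.ofReal (f x) ∂(Ξ ω) ∂P = ENNReal.ofReal (ρ * ∫ x, f x) := by
  set φ : 𝓢(Ed d, ℂ) :=
    (hcs.comp_left Complex.ofReal_zero).toSchwartzMap (Complex.ofRealCLM.contDiff.comp hf)
  have hφ : ∀ μ : Measure (Ed d), ∫ x, φ x ∂μ = ((∫ x, f x ∂μ : ℝ) : ℂ) := fun μ => integral_ofReal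
  obtain ⟨hL2, hmean, -⟩ := hIS φ
  simp_rw [hφ] at hL2 hmean
  rw [integral_complex_ofReal] at hmean
  have hint : Integrable (fun ω => ∫ x, f x ∂(Ξ ω)) P := by
    simpa using (hL2.integrable one_le_two).re
  have hmean' : ∫ ω, ∫ x, f x ∂(Ξ ω) ∂P = ρ * ∫ x, f x := by exact_mod_cast hmean
  calc ∫⁻ ω, ∫⁻ x, ENNReal.ofReal (f x) ∂(Ξ ω) ∂P
      = ∫⁻ ω, ENNReal.ofReal (∫ x, f x ∂(Ξ ω)) ∂P := by
        refine lintegral_congr fun ω => ?_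
        have := hΞloc ω
        exact (ofReal_integral_eq_lintegral_ofReal
          (hf.continuous.integrable_of_hasCompactSupport hcs) (ae_of_all _ hnn)).symm
    _ = ENNReal.ofReal (ρ * ∫ x, f x) := by
        rw [← hmean', ofReal_integral_eq_lintegral_ofReal hint
          (ae_of_all _ fun ω => integral_nonneg hnn)]

theorem lintegral_lintegral_ofReal_le (hIS : HasIntensityAndStructure P Ξ ρ S)
    (hΞmeas : Measurable Ξ) (hΞloc : ∀ ω, IsLocallyFiniteMeasure (Ξ ω)) (hρ : 0 ≤ ρ) {f : Ed d → ℝ}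
    (hf : ContDiff ℝ (⊤ : ℕ∞) f) (hint : Integrable f) (hnn : 0 ≤ f) :
    ∫⁻ ω, ∫⁻ x, ENNReal.ofReal (f x) ∂(Ξ ω) ∂P ≤ ENNReal.ofReal (ρ * ∫ x, f x) := by
  set g : ℕ → Ed d → ℝ := fun k x => cutoffBump (Ed d) k x * f x
  have hg_smooth : ∀ k, ContDiff ℝ (⊤ : ℕ∞) (g k) :=
    fun k => (cutoffBump (Ed d) k).contDiff.mul hf
  have hg_supp : ∀ k, HasCompactSupport (g k) :=
    fun k => (cutoffBump (Ed d) k).hasCompactSupport.mul_right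
  have hg_meas : ∀ k, Measurable fun x => ENNReal.ofReal (g k x) :=
    fun k => (hg_smooth k).continuous.measurable.ennreal_ofReal
  have hg_mono : Monotone fun k x => ENNReal.ofReal (g k x) := fun k l hkl x =>
    ENNReal.ofReal_le_ofReal (mul_le_mul_of_nonneg_right (monotone_cutoffBump x hkl) (hnn x))
  calc ∫⁻ ω, ∫⁻ x, ENNReal.ofReal (f x) ∂(Ξ ω) ∂P
      = ∫⁻ ω, ⨆ k, ∫⁻ x, ENNReal.ofReal (g k x) ∂(Ξ ω) ∂P := by
        refine lintegral_congr fun ω => ?_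
        rw [← lintegral_iSup hg_meas hg_mono]
        simp_rw [g, iSup_ofReal_cutoffBump_mul _ (hnn _)]
    _ = ⨆ k, ∫⁻ ω, ∫⁻ x, ENNReal.ofReal (g k x) ∂(Ξ ω) ∂P :=
        lintegral_iSup (fun k => (Measure.measurable_lintegral (hg_meas k)).comp hΞmeas)
          fun k l hkl ω => lintegral_mono (hg_mono hkl)
    _ ≤ ENNReal.ofReal (ρ * ∫ x, f x) := by
        refine iSup_le fun k => ?_
        rw [hIS.lintegral_lintegral_ofReal_eq_of_hasCompactSupport hΞloc (hg_smooth k) (hg_supp k)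
          fun x => mul_nonneg (cutoffBump (Ed d) k).nonneg (hnn x)]
        refine ENNReal.ofReal_le_ofReal (mul_le_mul_of_nonneg_left ?_ hρ)
        exact integral_mono ((hg_smooth k).continuous.integrable_of_hasCompactSupport (hg_supp k))
          hint fun x => mul_le_of_le_one_left (hnn x) (cutoffBump (Ed d) k).le_one

theorem ae_integrable_decayWeight (hIS : HasIntensityAndStructure P Ξ ρ S)
    (hΞmeas : Measurable Ξ) (hΞloc : ∀ ω, IsLocallyFiniteMeasure (Ξ ω)) (hρ : 0 ≤ ρ) :
    ∀ᵐ ω ∂P, Integrable (decayWeight (Ed d)) (Ξ ω) := by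
  have hnn : 0 ≤ decayWeight (Ed d) := fun x => (decayWeight_pos x).le
  have hfin := (hIS.lintegral_lintegral_ofReal_le hΞmeas hΞloc hρ contDiff_decayWeight
    integrable_decayWeight hnn).trans_lt ENNReal.ofReal_lt_top
  have hmeas : Measurable fun ω => ∫⁻ x, ENNReal.ofReal (decayWeight (Ed d) x) ∂(Ξ ω) :=
    (Measure.measurable_lintegral contDiff_decayWeight.continuous.measurable.ennreal_ofReal).comp
      hΞmeas
  filter_upwards [ae_lt_top hmeas hfin.ne] with ω hω
  exact ⟨contDiff_decayWeight.continuous.aestronglyMeasurable,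
    (hasFiniteIntegral_iff_ofReal (ae_of_all _ hnn)).2 hω⟩

end HasIntensityAndStructure

theorem generalized_stealthy_as_exact_linear_statistics_general
    {d : ℕ} {Ω : Type*} [MeasurableSpace Ω] (P : Measure Ω) [IsProbabilityMeasure P]
    (Ξ : Ω → Measure (Ed d)) (hΞmeas : Measurable Ξ)
    (hΞloc : ∀ ω, IsLocallyFiniteMeasure (Ξ ω))
    (ρ : ℝ) (hρ : 0 < ρ) (S : Ed d → ℝ)
    (hIS : HasIntensityAndStructure P Ξ ρ S)
    (U : Set (Ed d))
    (hgap : ∀ ξ ∈ U, S ξ = 0) :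
    ∀ᵐ ω ∂P, ∀ φ : SchwartzMap (Ed d) ℂ,
      HasCompactSupport (𝓕 (fun x => (φ x : ℂ))) →
      tsupport (𝓕 (fun x => (φ x : ℂ))) ⊆ U →
      Integrable (fun x => φ x) (Ξ ω) ∧
        (∫ x, φ x ∂(Ξ ω)) = (ρ : ℂ) * (∫ x, φ x) := by
  -- makes `Lp ℂ 1` second countable, hence separable
  have : Fact ((1 : ENNReal) ≠ ⊤) := ⟨ENNReal.one_ne_top⟩
  obtain ⟨D, hDU, hDc, hdense⟩ := exists_countable_subset_image_subset_closure
    (weightedFourierL1 (Ed d)) {φ : 𝓢(Ed d, ℂ) | tsupport (𝓕 (fun x => φ x)) ⊆ U}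
  set ν : Measure (Ed d) := ENNReal.ofReal ρ • volume
  have hν : Integrable (decayWeight (Ed d)) ν :=
    integrable_decayWeight.smul_measure ENNReal.ofReal_ne_top
  have hν_integral : ∀ φ : 𝓢(Ed d, ℂ), ∫ x, φ x ∂ν = ρ * ∫ x, φ x := fun φ => by
    rw [integral_smul_measure, ENNReal.toReal_ofReal hρ.le, Complex.real_smul]
  have hD : ∀ᵐ ω ∂P, ∀ ψ ∈ D, ∫ x, ψ x ∂(Ξ ω) = ∫ x, ψ x ∂ν := by
    refine (ae_ball_iff hDc).2 fun ψ hψ => ?_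
    filter_upwards [hIS.ae_integral_eq_of_tsupport_fourier_subset hgap (hDU hψ)] with ω hω
    rw [hω, hν_integral]
  filter_upwards [hIS.ae_integrable_decayWeight hΞmeas hΞloc hρ.le, hD] with ω hω hωD φ _ hφU
  refine ⟨φ.integrable_of_integrable_decayWeight hω, ?_⟩
  rw [← hν_integral]
  exact φ.integral_eq_of_mem_closure_image hω hν hωD (hdense ⟨φ, hφU, rfl⟩)

/-- **Almost sure exactness of band-limited linear statistics.**
If the structure function `S` of a random measure `Ξ` on `ℝ^d` with intensity `ρ > 0`
vanishes on the nonempty open set `U`, then on a single event of probability one, for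
every Schwartz function `φ` whose Fourier transform has compact support contained in
`U`, the linear statistic `∫ φ dΞ_ω` is defined and equals its mean `ρ ∫ φ(x) dx`. -/
theorem generalized_stealthy_as_exact_linear_statistics
    {d : ℕ} {Ω : Type*} [MeasurableSpace Ω] (P : Measure Ω) [IsProbabilityMeasure P]
    (Ξ : Ω → Measure (Ed d)) (hΞmeas : Measurable Ξ)
    (hΞloc : ∀ ω, IsLocallyFiniteMeasure (Ξ ω))
    (ρ : ℝ) (hρ : 0 < ρ) (S : Ed d → ℝ) (hSnonneg : ∀ ξ, 0 ≤ S ξ)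
    (hIS : HasIntensityAndStructure P Ξ ρ S)
    (U : Set (Ed d)) (hUopen : IsOpen U) (hUne : U.Nonempty)
    (hgap : ∀ ξ ∈ U, S ξ = 0) :
    ∀ᵐ ω ∂P, ∀ φ : SchwartzMap (Ed d) ℂ,
      HasCompactSupport (𝓕 (fun x => (φ x : ℂ))) →
      tsupport (𝓕 (fun x => (φ x : ℂ))) ⊆ U →
      Integrable (fun x => φ x) (Ξ ω) ∧
        (∫ x, φ x ∂(Ξ ω)) = (ρ : ℂ) * (∫ x, φ x) :=
  generalized_stealthy_as_exact_linear_statistics_general P Ξ hΞmeas hΞloc ρ hρ S hIS U hgap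

end
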